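/- arXiv:1308.1147 — 2 statements merged into one kernel-verified Lean document; each statement's English description precedes it below -/
import Mathlib

section
/- Entropy bound for the sequence class: fix p > 0, let F = {f ∈ ℓ : f_j = (1+g_j)/2 for some g ∈ B_p} and X = {e_1, e_2, …}. Then for every ε > 0 and every n, H₂(F,ε) ≤ (A/ε)^p, where A is a constant depending only on p. -/
open MeasureTheory Real

namespace RST

variable {X : Type*} [MeasurableSpace X]

/-- A sample of size `n` of pairs in `X × ℝ` (with the response values in `[0,1]`). -/
abbrev Sample (X : Type*) (n : ℕ) := Fin n → X × ℝ

/-- The risk `L(f) = E (f(X) - Y)²`. -/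
noncomputable def risk (P : Measure (X × ℝ)) (f : X → ℝ) : ℝ :=
  ∫ z, (f z.1 - z.2) ^ 2 ∂P

/-- The squared `L₂(μ_X)` norm `‖g‖²`, where `μ_X` is the marginal of the first coordinate. -/
noncomputable def normSq (P : Measure (X × ℝ)) (g : X → ℝ) : ℝ :=
  ∫ x, g x ^ 2 ∂(P.map Prod.fst)

/-- The empirical `ℓ₂` pseudo-distance `d_S(f,g)`. -/
noncomputable def empDist {n : ℕ} (S : Sample X n) (f g : X → ℝ) : ℝ :=
  Real.sqrt ((n : ℝ)⁻¹ * ∑ i, (f (S i).1 - g (S i).1) ^ 2)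

/-- A (proper) `ε`-net of `F` with respect to `d_S`. -/
def IsNet {n N : ℕ} (F : Set (X → ℝ)) (ε : ℝ) (S : Sample X n) (c : Fin N → X → ℝ) : Prop :=
  (∀ i, c i ∈ F) ∧ ∀ f ∈ F, ∃ i, empDist S f (c i) ≤ ε

/-- The covering number `N₂(F, ε, S)`. -/
noncomputable def coveringNumber {n : ℕ} (F : Set (X → ℝ)) (ε : ℝ) (S : Sample X n) : ℕ :=
  sInf {N : ℕ | ∃ c : Fin N → X → ℝ, IsNet F ε S c}

/-- The empirical mean of `g` on the sample `S`. -/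
noncomputable def empMean {n : ℕ} (g : X × ℝ → ℝ) (S : Sample X n) : ℝ :=
  (n : ℝ)⁻¹ * ∑ i, g (S i)

/-- The empirical Rademacher average `R̂_n(G, S)`. -/
noncomputable def empRad {n : ℕ} (G : Set (X × ℝ → ℝ)) (S : Sample X n) : ℝ :=
  ((2 : ℝ) ^ n)⁻¹ * ∑ σ : Fin n → Bool,
    sSup ((fun g => (n : ℝ)⁻¹ * ∑ i, (if σ i then (1 : ℝ) else -1) * g (S i)) '' G)

/-- `φ` is an upper function for the class `G` at sample size `n`. -/
def IsUpperFunction (n : ℕ) (G : Set (X × ℝ → ℝ)) (φ : ℝ → ℝ) : Prop :=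
  ∀ r : ℝ, 0 < r → ∀ S : Sample X n, empRad {g ∈ G | empMean g S ≤ r} S ≤ φ r

/-- `φ` is sub-root: nonnegative, nondecreasing, and `φ(r)/√r` nonincreasing on `(0,∞)`. -/
def IsSubRoot (φ : ℝ → ℝ) : Prop :=
  (∀ r, 0 ≤ φ r) ∧ Monotone φ ∧
    ∀ r₁ r₂ : ℝ, 0 < r₁ → r₁ ≤ r₂ → φ r₂ / Real.sqrt r₂ ≤ φ r₁ / Real.sqrt r₁

/-- `r` is a localization radius of `G`: some sub-root upper function `φ_n` satisfies
`φ_n(s) ≤ s` for all `s ≥ r`. -/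
def IsLocRadius (n : ℕ) (G : Set (X × ℝ → ℝ)) (r : ℝ) : Prop :=
  0 ≤ r ∧ ∃ φ : ℝ → ℝ, IsUpperFunction n G φ ∧ IsSubRoot φ ∧ ∀ s, r ≤ s → φ s ≤ s

/-- The class `G = {(f-g)² : f, g ∈ F}`, as functions on `Z = X × ℝ`. -/
def diffSqClass (F : Set (X → ℝ)) : Set (X × ℝ → ℝ) :=
  {h | ∃ f ∈ F, ∃ g ∈ F, h = fun z => (f z.1 - g z.1) ^ 2}

/-- The squared loss `ℓ∘f : (x,y) ↦ (f(x)-y)²`. -/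
def loss (f : X → ℝ) : X × ℝ → ℝ := fun z => (f z.1 - z.2) ^ 2

/-- The squared loss class `ℓ∘F`. -/
def lossClass (F : Set (X → ℝ)) : Set (X × ℝ → ℝ) := loss '' F

/-- The distribution of an i.i.d. `n`-sample from `P`. -/
noncomputable def sampleMeasure (P : Measure (X × ℝ)) [IsProbabilityMeasure P] (n : ℕ) :
    Measure (Sample X n) := Measure.pi fun _ => P

/-- The distribution of three independent i.i.d. `n`-samples from `P`. -/
noncomputable def tripleMeasure (P : Measure (X × ℝ)) [IsProbabilityMeasure P] (n : ℕ) :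
    Measure (Sample X n × Sample X n × Sample X n) :=
  (sampleMeasure P n).prod ((sampleMeasure P n).prod (sampleMeasure P n))

/-- The response `Y` lies in `[0,1]` almost surely. -/
def yBounded (P : Measure (X × ℝ)) : Prop := ∀ᵐ z ∂P, z.2 ∈ Set.Icc (0 : ℝ) 1

/-- The aggregation-of-leaders procedure with covering radius `ε`:
a proper empirical `ε`-net `center S ·` built from `S`, the induced partition of `F`
via `assign S`, per-cell least squares estimators `erm S S' ·` computed on `S'`, and a final
sharp MS-aggregation (on `S''`) of the per-cell least squares estimators. -/
structure AggOfLeaders (F : Set (X → ℝ)) (n : ℕ) (ε : ℝ) where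
  center : Sample X n → ℕ → (X → ℝ)
  assign : Sample X n → (X → ℝ) → ℕ
  erm : Sample X n → Sample X n → ℕ → (X → ℝ)
  estimator : Sample X n → Sample X n → Sample X n → X → ℝ
  two_le_N : ∀ S : Sample X n, 2 ≤ coveringNumber F ε S
  center_mem : ∀ S : Sample X n, ∀ i < coveringNumber F ε S, center S i ∈ F
  center_net : ∀ S : Sample X n, ∀ f ∈ F, ∃ i < coveringNumber F ε S, empDist S f (center S i) ≤ ε
  assign_lt : ∀ S : Sample X n, ∀ f ∈ F, assign S f < coveringNumber F ε S
  assign_isMin : ∀ S : Sample X n, ∀ f ∈ F, ∀ j < coveringNumber F ε S,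
    empDist S f (center S (assign S f)) ≤ empDist S f (center S j)
  erm_mem : ∀ S S' : Sample X n, ∀ i < coveringNumber F ε S,
    (∃ f ∈ F, assign S f = i) → erm S S' i ∈ F ∧ assign S (erm S S' i) = i
  erm_min : ∀ S S' : Sample X n, ∀ i < coveringNumber F ε S, ∀ f ∈ F, assign S f = i →
    empMean (loss (erm S S' i)) S' ≤ empMean (loss f) S'
  estimator_range : ∀ S S' S'' x, estimator S S' S'' x ∈ Set.Icc (0 : ℝ) 1
  estimator_measurable : Measurable (fun q : (Sample X n × Sample X n × Sample X n) × X =>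
    estimator q.1.1 q.1.2.1 q.1.2.2 q.2)
  sharp_MS : ∃ C₀ : ℝ, 0 < C₀ ∧
    ∀ (P : Measure (X × ℝ)) [IsProbabilityMeasure P], yBounded P →
    ∀ S S' : Sample X n, ∀ δ : ℝ, 0 < δ →
      ENNReal.ofReal (1 - δ) ≤ (sampleMeasure P n) {S'' | risk P (estimator S S' S'') ≤
        (⨅ i : {i : ℕ // i < coveringNumber F ε S ∧ ∃ f ∈ F, assign S f = i},
          risk P (erm S S' i.1)) + C₀ * Real.log ((coveringNumber F ε S : ℝ) / δ) / n}

end RST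

namespace RST

/-- The ball `B_p = {g : |g_j| ≤ j^{-1/p}}` of sequences (indexed by `j = 1, 2, …`, here
represented by `j : ℕ` standing for the `(j+1)`-st coordinate). -/
def Bp (p : ℝ) : Set (ℕ → ℝ) :=
  {g | ∀ j : ℕ, |g j| ≤ ((j : ℝ) + 1) ^ (-(1 / p))}

/-- The class `F = {f : f_j = (1+g_j)/2, g ∈ B_p}` of `[0,1]`-valued sequences, viewed as
functions on `X = {e_1, e_2, …}` (identified with `ℕ`) via `f(e_j) = f_j`. -/
def seqClass (p : ℝ) : Set (ℕ → ℝ) :=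
  {f | ∃ g ∈ Bp p, f = fun j => (1 + g j) / 2}

end RST

/-! Every `g ∈ B_p` has `|g_j| ≤ 2ε` once `j ≥ J := ⌈(2ε)^{-p}⌉`, so only the first `J`
coordinates need to be discretised. Rounding coordinate `j < J` to a grid of mesh `4ε` in
`[-(j+1)^{-1/p}, (j+1)^{-1/p}]` gives a `2ε`-net of `B_p` in the sup norm, hence a proper `ε`-net
of `F` for every empirical distance `d_S`, with at most
`∏_{j<J} 2 (J/(j+1))^{1/p} = 2^J (J^J/J!)^{1/p} ≤ 2^J e^{J/p}` elements.
So `H₂(F,ε) ≤ J (log 2 + 1/p) ≤ 2 (log 2 + 1/p) (2ε)^{-p}`. -/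

namespace RST

open Finset

section Covering

variable {X : Type*}

theorem empDist_le_of_forall_abs_sub_le {n : ℕ} (S : Sample X n) {f g : X → ℝ} {ε : ℝ}
    (hε : 0 ≤ ε) (h : ∀ x, |f x - g x| ≤ ε) : empDist S f g ≤ ε := by
  have hsum : ∑ i, (f (S i).1 - g (S i).1) ^ 2 ≤ n * ε ^ 2 := by
    simpa using sum_le_card_nsmul univ _ _ fun i _ =>
      sq_le_sq' (abs_le.1 (h (S i).1)).1 (abs_le.1 (h (S i).1)).2
  have hmean : (n : ℝ)⁻¹ * ∑ i, (f (S i).1 - g (S i).1) ^ 2 ≤ ε ^ 2 :=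
    calc _ ≤ (n : ℝ)⁻¹ * (n * ε ^ 2) := by gcongr
      _ = ((n : ℝ)⁻¹ * n) * ε ^ 2 := by ring
      _ ≤ ε ^ 2 :=
        mul_le_of_le_one_left (sq_nonneg ε) (inv_mul_le_one_of_le₀ le_rfl n.cast_nonneg)
  exact (Real.sqrt_le_sqrt hmean).trans_eq (Real.sqrt_sq hε)

theorem coveringNumber_le_card (F : Set (X → ℝ)) {ε : ℝ} (hε : 0 ≤ ε) {n : ℕ}
    (S : Sample X n) (C : Finset (X → ℝ)) (hCF : ↑C ⊆ F)
    (hC : ∀ f ∈ F, ∃ c ∈ C, ∀ x, |f x - c x| ≤ ε) :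
    coveringNumber F ε S ≤ #C := by
  refine Nat.sInf_le ⟨fun i => C.equivFin.symm i, fun i => hCF (C.equivFin.symm i).2,
    fun f hf => ?_⟩
  obtain ⟨c, hc, hfc⟩ := hC f hf
  exact ⟨C.equivFin ⟨c, hc⟩, by simpa using empDist_le_of_forall_abs_sub_le S hε hfc⟩

end Covering

theorem exists_finset_cover_of_abs_le {a δ : ℝ} (ha : 0 ≤ a) (hδ : 0 < δ) :
    ∃ T : Finset ℝ, #T ≤ ⌊a / δ⌋₊ + 1 ∧ (∀ t ∈ T, |t| ≤ a) ∧
      ∀ x, |x| ≤ a → ∃ t ∈ T, |x - t| ≤ δ := by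
  set t : ℕ → ℝ := fun k => min a (-a + δ + 2 * δ * k)
  refine ⟨(range (⌊a / δ⌋₊ + 1)).image t, card_image_le.trans (by simp), ?_,
    fun x hx => ?_⟩
  · simp only [mem_image, mem_range, forall_exists_index, and_imp]
    rintro _ k - rfl
    rw [abs_le]
    exact ⟨le_min (by linarith) (by nlinarith [k.cast_nonneg (α := ℝ)]), min_le_left _ _⟩
  · obtain ⟨hxl, hxu⟩ := abs_le.1 hx
    set k := ⌊(x + a) / (2 * δ)⌋₊
    have hk : (k : ℝ) ≤ (x + a) / (2 * δ) :=
      Nat.floor_le (div_nonneg (by linarith) (by positivity))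
    have hk' : (x + a) / (2 * δ) < k + 1 := Nat.lt_floor_add_one _
    rw [le_div_iff₀ (by positivity)] at hk
    rw [div_lt_iff₀ (by positivity)] at hk'
    refine ⟨t k, mem_image_of_mem _ (mem_range.2 (Nat.lt_succ_of_le ?_)), ?_⟩
    · exact Nat.floor_le_floor (by rw [div_le_div_iff₀ (by positivity) hδ]; nlinarith)
    · simp only [t]
      rcases le_total a (-a + δ + 2 * δ * k) with h | h
      · rw [min_eq_left h, abs_le]; constructor <;> linarith
      · rw [min_eq_right h, abs_le]; constructor <;> linarith

theorem exists_finset_cover_box (a : ℕ → ℝ) (ha : ∀ j, 0 ≤ a j) {δ : ℝ} (hδ : 0 < δ)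
    (J : ℕ) (haJ : ∀ j, J ≤ j → a j ≤ δ) :
    ∃ C : Finset (ℕ → ℝ), #C ≤ ∏ j ∈ range J, (⌊a j / δ⌋₊ + 1) ∧
      (∀ c ∈ C, ∀ j, |c j| ≤ a j) ∧
      ∀ g : ℕ → ℝ, (∀ j, |g j| ≤ a j) → ∃ c ∈ C, ∀ j, |g j - c j| ≤ δ := by
  classical
  choose T hTcard hTmem hTcov using fun j => exists_finset_cover_of_abs_le (ha j) hδ
  let extend : (Fin J → ℝ) → ℕ → ℝ := fun w j => if h : j < J then w ⟨j, h⟩ else 0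
  refine ⟨(Fintype.piFinset fun i : Fin J => T i).image extend, ?_, ?_, fun g hg => ?_⟩
  · calc _ ≤ ∏ i : Fin J, #(T i) := card_image_le.trans (by simp)
      _ = ∏ j ∈ range J, #(T j) := Fin.prod_univ_eq_prod_range (fun j => #(T j)) J
      _ ≤ _ := prod_le_prod' fun j _ => hTcard j
  · simp only [mem_image, Fintype.mem_piFinset, forall_exists_index, and_imp]
    rintro _ w hw rfl j
    by_cases hj : j < J
    · simpa [extend, hj] using hTmem j _ (hw ⟨j, hj⟩)
    · simpa [extend, hj] using ha j
  · choose t ht hgt using fun i : Fin J => hTcov i (g i) (hg i)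
    refine ⟨extend t, mem_image_of_mem _ (Fintype.mem_piFinset.2 ht), fun j => ?_⟩
    by_cases hj : j < J
    · simpa [extend, hj] using hgt ⟨j, hj⟩
    · simpa [extend, hj] using (hg j).trans (haJ j (not_lt.1 hj))

theorem coveringNumber_seqClass_le (p : ℝ) {ε : ℝ} (hε : 0 < ε) (J : ℕ)
    (hJ : ∀ j, J ≤ j → ((j : ℝ) + 1) ^ (-(1 / p)) ≤ 2 * ε) {n : ℕ} (S : Sample ℕ n) :
    coveringNumber (seqClass p) ε S ≤
      ∏ j ∈ range J, (⌊((j : ℝ) + 1) ^ (-(1 / p)) / (2 * ε)⌋₊ + 1) := by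
  classical
  obtain ⟨C, hCcard, hCB, hC⟩ := exists_finset_cover_box (fun j => ((j : ℝ) + 1) ^ (-(1 / p)))
    (fun j => by positivity) (by positivity : 0 < 2 * ε) J hJ
  let half : (ℕ → ℝ) → ℕ → ℝ := fun g j => (1 + g j) / 2
  refine (coveringNumber_le_card _ hε.le S (C.image half) ?_ ?_).trans
    (card_image_le.trans hCcard)
  · simp only [coe_image, Set.image_subset_iff]
    exact fun c hc => ⟨c, hCB c hc, rfl⟩
  · rintro _ ⟨g, hg, rfl⟩
    obtain ⟨c, hc, hgc⟩ := hC g hg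
    refine ⟨half c, mem_image_of_mem _ hc, fun j => ?_⟩
    rw [show (1 + g j) / 2 - half c j = (g j - c j) / 2 by simp only [half]; ring, abs_div,
      abs_two]
    linarith [hgc j]

theorem coveringNumber_seqClass_le_one {p ε : ℝ} (hp : 0 ≤ p) (hε : 0 < ε)
    (hε1 : 1 ≤ 2 * ε) {n : ℕ} (S : Sample ℕ n) :
    coveringNumber (seqClass p) ε S ≤ 1 := by
  simpa using coveringNumber_seqClass_le p hε 0 (fun j _ => le_trans
    (rpow_le_one_of_one_le_of_nonpos (by simp) (by simp only [Left.neg_nonpos_iff]; positivity))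
    hε1) S

theorem floor_rpow_div_add_one_le {p δ : ℝ} (hp : 0 < p) (hδ : 0 < δ) {J j : ℕ} (hj : j < J)
    (hJ : (J : ℝ) ^ (-(1 / p)) ≤ δ) :
    (⌊((j : ℝ) + 1) ^ (-(1 / p)) / δ⌋₊ + 1 : ℝ) ≤
      2 * ((J : ℝ) / (j + 1)) ^ (1 / p) := by
  have hj1 : (0 : ℝ) < j + 1 := by positivity
  have hJ0 : (0 : ℝ) < J := by exact_mod_cast (Nat.zero_le j).trans_lt hj
  have hratio : 1 ≤ ((J : ℝ) / (j + 1)) ^ (1 / p) :=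
    Real.one_le_rpow ((one_le_div hj1).2 (by exact_mod_cast hj)) (by positivity)
  have hquot : ((j : ℝ) + 1) ^ (-(1 / p)) / δ ≤ ((J : ℝ) / (j + 1)) ^ (1 / p) :=
    calc ((j : ℝ) + 1) ^ (-(1 / p)) / δ
        ≤ ((j : ℝ) + 1) ^ (-(1 / p)) / (J : ℝ) ^ (-(1 / p)) := by gcongr
      _ = ((J : ℝ) / (j + 1)) ^ (1 / p) := by
          rw [Real.rpow_neg hj1.le, Real.rpow_neg hJ0.le, Real.div_rpow hJ0.le hj1.le]
          field_simp
  linarith [Nat.floor_le (by positivity : 0 ≤ ((j : ℝ) + 1) ^ (-(1 / p)) / δ)]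

theorem prod_floor_rpow_div_add_one_le {p δ : ℝ} (hp : 0 < p) (hδ : 0 < δ) {J : ℕ}
    (hJ : (J : ℝ) ^ (-(1 / p)) ≤ δ) :
    ∏ j ∈ range J, (⌊((j : ℝ) + 1) ^ (-(1 / p)) / δ⌋₊ + 1 : ℝ) ≤
      2 ^ J * exp (J / p) :=
  calc ∏ j ∈ range J, (⌊((j : ℝ) + 1) ^ (-(1 / p)) / δ⌋₊ + 1 : ℝ)
      ≤ ∏ j ∈ range J, 2 * ((J : ℝ) / (j + 1)) ^ (1 / p) :=
        prod_le_prod (fun _ _ => by positivity) fun j hj =>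
          floor_rpow_div_add_one_le hp hδ (mem_range.1 hj) hJ
    _ = 2 ^ J * ((J : ℝ) ^ J / J.factorial) ^ (1 / p) := by
        rw [prod_mul_distrib, prod_const, card_range,
          Real.finsetProd_rpow _ _ fun _ _ => by positivity, prod_div_distrib, prod_const,
          card_range, ← prod_range_add_one_eq_factorial]
        push_cast
        rfl
    _ ≤ 2 ^ J * exp J ^ (1 / p) := by
        gcongr
        exact pow_div_factorial_le_exp (J : ℝ) J.cast_nonneg J
    _ = 2 ^ J * exp (J / p) := by rw [← exp_mul, mul_one_div]

theorem log_coveringNumber_seqClass_le {p ε : ℝ} (hp : 0 < p) (hε : 0 < ε) {J : ℕ}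
    (hJ0 : J ≠ 0) (hJ : (J : ℝ) ^ (-(1 / p)) ≤ 2 * ε) {n : ℕ} (S : Sample ℕ n) :
    log (coveringNumber (seqClass p) ε S) ≤ J * (log 2 + 1 / p) := by
  have hcov := coveringNumber_seqClass_le p hε J (fun j hj => le_trans
    (rpow_le_rpow_of_nonpos (by positivity) (by norm_cast; omega)
      (by simp only [Left.neg_nonpos_iff]; positivity)) hJ) S
  rcases (coveringNumber (seqClass p) ε S).eq_zero_or_pos with h0 | hpos
  · rw [h0, Nat.cast_zero, log_zero]
    positivity
  calc log (coveringNumber (seqClass p) ε S) ≤ log (2 ^ J * exp (J / p)) := by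
        refine log_le_log (by exact_mod_cast hpos) ?_
        refine le_trans ?_ (prod_floor_rpow_div_add_one_le hp (by positivity) hJ)
        exact_mod_cast hcov
    _ = J * (log 2 + 1 / p) := by
        rw [log_mul (by positivity) (by positivity), log_pow, log_exp]
        ring

/-- **Theorem 7, entropy bound (eq. (th:low2:1)).** For every `p > 0` there is a constant
`A` depending only on `p` such that the empirical entropy of the sequence class `F`
satisfies `H₂(F,ε) ≤ (A/ε)^p` for every `ε > 0` (and every sample size `n`). -/
theorem entropy_bound_sequence_class (p : ℝ) (hp : 0 < p) :
    ∃ A : ℝ, 0 < A ∧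
      ∀ n : ℕ, 1 ≤ n → ∀ ε : ℝ, 0 < ε → ∀ S : Sample ℕ n,
        Real.log ((coveringNumber (seqClass p) ε S : ℝ)) ≤ (A / ε) ^ p := by
  set B := 2 * (log 2 + 1 / p)
  refine ⟨(B * 2 ^ (-p)) ^ (1 / p), by positivity, fun n _ ε hε S => ?_⟩
  have hRHS : ((B * 2 ^ (-p)) ^ (1 / p) / ε) ^ p = B * (2 * ε) ^ (-p) := by
    rw [div_rpow (by positivity) hε.le, ← rpow_mul (by positivity), one_div_mul_cancel hp.ne',
      rpow_one, mul_rpow two_pos.le hε.le, rpow_neg hε.le]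
    ring
  rw [hRHS]
  rcases le_or_gt 1 (2 * ε) with hbig | hsmall
  · have hcov := coveringNumber_seqClass_le_one hp.le hε hbig S
    exact (log_nonpos (by positivity) (by exact_mod_cast hcov)).trans (by positivity)
  · set J := ⌈(2 * ε) ^ (-p)⌉₊
    have hJ0 : J ≠ 0 := (Nat.ceil_pos.2 (by positivity)).ne'
    have hJ : (J : ℝ) ^ (-(1 / p)) ≤ 2 * ε := by
      rw [← one_div_neg_eq_neg_one_div, one_div,
        rpow_inv_le_iff_of_neg (by positivity) (by positivity) (neg_lt_zero.2 hp)]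
      exact Nat.le_ceil _
    have hJle : (J : ℝ) ≤ 2 * (2 * ε) ^ (-p) := by
      have := Nat.ceil_lt_add_one (by positivity : 0 ≤ (2 * ε) ^ (-p))
      have := one_le_rpow_of_pos_of_le_one_of_nonpos (by positivity) hsmall.le
        (by linarith : -p ≤ 0)
      linarith
    calc log (coveringNumber (seqClass p) ε S) ≤ J * (log 2 + 1 / p) :=
          log_coveringNumber_seqClass_le hp hε hJ0 hJ S
      _ ≤ B * (2 * ε) ^ (-p) := by
          nlinarith [show 0 < log 2 + 1 / p by positivity]

end RST
end

section
/- Minimax regret lower bound for the sequence class: fix p ≥ 2 and let F = {f ∈ ℓ : f_j = (1+g_j)/2 for some g ∈ B_p}, X = {e_1, e_2, …}, Y = [0,1]. There exists an absolute positive constant c such that for every n ≥ 1 the minimax regret satisfies V_n(F) ≥ c n^{−1/(p−1)}; that is, for every estimator f̂ there exists a probability distribution P_{XY} on X × [0,1] such that E‖f̂ − η‖² − inf_{f∈F} ‖f − η‖² ≥ c n^{−1/(p−1)}, where η(x) = E[Y|X=x]. In particular, since W_n(F) ≤ C_p n^{−2/(2+p)} and n^{−1/(p−1)} decays slower than n^{−2/(2+p)}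 for p > 2, the minimax regret rate is strictly slower than the minimax risk rate for p > 2. -/
open MeasureTheory Real

/-!
Hypercube argument. For `σ ∈ {0,1}^m` let `X` be uniform on `{0, …, m-1}` and `Y = σ_X`.
A coordinate `j` missed by the sample is invisible to the estimator, so pairing `σ` with `σ`
flipped at `j` shows that, on average over `σ`, the estimator pays `1/4` there; at most `n`
coordinates are hit, hence the average risk is at least `(m - n)/(4m)`. The class contains the
sequence `(1 ± (j+1)^{-1/p})/2` pointing towards `σ`, whose risk is at most `(1 - m^{-1/p})/4`.
So some `σ` has regret at least `(m^{-1/p} - n/m)/4`, and `m ≈ (2n)^{p/(p-1)}` makes this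
at least `n^{-1/(p-1)}/32`.
-/

namespace RST

open Finset
open scoped ENNReal

lemma risk_nonneg {X : Type*} [MeasurableSpace X] (P : Measure (X × ℝ)) (f : X → ℝ) :
    0 ≤ risk P f :=
  integral_nonneg fun _ => sq_nonneg _

lemma card_div_four_le_sum_sq_sub {ι : Type*} [Fintype ι] {e : ι → ι}
    (he : Function.Involutive e) {a y : ι → ℝ} (ha : ∀ i, a (e i) = a i)
    (hy : ∀ i, y (e i) = 1 - y i) (hy01 : ∀ i, y i = 0 ∨ y i = 1) :
    (Fintype.card ι : ℝ) / 4 ≤ ∑ i, (a i - y i) ^ 2 := by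
  have hpair : ∀ i, 1 / 2 ≤ (a i - y i) ^ 2 + (a (e i) - y (e i)) ^ 2 := by
    intro i
    rw [ha, hy]
    rcases hy01 i with h | h <;> rw [h] <;> nlinarith [sq_nonneg (2 * a i - 1)]
  have hswap : ∑ i, (a (e i) - y (e i)) ^ 2 = ∑ i, (a i - y i) ^ 2 :=
    Equiv.sum_comp (he.toPerm e) fun i => (a i - y i) ^ 2
  have hsum := Finset.sum_le_sum fun i (_ : i ∈ univ) => hpair i
  rw [sum_add_distrib, hswap, sum_const, card_univ, nsmul_eq_mul] at hsum
  linarith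

noncomputable def uniformRange (m : ℕ) : Measure ℕ :=
  (m : ℝ≥0∞)⁻¹ • ∑ j ∈ range m, Measure.dirac j

instance (m : ℕ) [NeZero m] : IsProbabilityMeasure (uniformRange m) := by
  constructor
  simp only [uniformRange, Measure.smul_apply, Measure.coe_finsetSum, Finset.sum_apply,
    measure_univ, sum_const, card_range, nsmul_eq_mul, mul_one, smul_eq_mul]
  exact ENNReal.inv_mul_cancel (NeZero.ne _) (ENNReal.natCast_ne_top m)

lemma integral_uniformRange (m : ℕ) (f : ℕ → ℝ) :
    ∫ j, f j ∂uniformRange m = (m : ℝ)⁻¹ * ∑ j ∈ range m, f j := by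
  rw [uniformRange, integral_smul_measure,
    integral_finsetSum_measure fun j _ => integrable_dirac enorm_lt_top]
  simp [integral_dirac, ENNReal.toReal_inv, smul_eq_mul]

section Hypercube

variable {m n : ℕ}

noncomputable def cubeLabel (σ : Fin m → Bool) (j : ℕ) : ℝ :=
  if h : j < m then (if σ ⟨j, h⟩ then 1 else 0) else 0

noncomputable def cubeLaw (σ : Fin m → Bool) : Measure (ℕ × ℝ) :=
  (uniformRange m).map fun j => (j, cubeLabel σ j)

noncomputable def cubeSample (σ : Fin m → Bool) (ω : Fin n → ℕ) : Sample ℕ n :=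
  fun i => (ω i, cubeLabel σ (ω i))

def flipAt (k : Fin m) (σ : Fin m → Bool) : Fin m → Bool :=
  Function.update σ k (!σ k)

lemma cubeLabel_eq_zero_or_one (σ : Fin m → Bool) (j : ℕ) :
    cubeLabel σ j = 0 ∨ cubeLabel σ j = 1 := by
  unfold cubeLabel
  split_ifs <;> simp

lemma flipAt_involutive (k : Fin m) : Function.Involutive (flipAt k) := by
  intro σ
  simp [flipAt]

lemma cubeLabel_flipAt_self (k : Fin m) (σ : Fin m → Bool) :
    cubeLabel (flipAt k σ) k = 1 - cubeLabel σ k := by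
  cases h : σ k <;> simp [cubeLabel, flipAt, h]

lemma cubeLabel_flipAt_of_ne {k : Fin m} (σ : Fin m → Bool) {j : ℕ} (hj : j ≠ k) :
    cubeLabel (flipAt k σ) j = cubeLabel σ j := by
  unfold cubeLabel flipAt
  by_cases h : j < m
  · have hne : (⟨j, h⟩ : Fin m) ≠ k := fun e => hj (congrArg Fin.val e)
    simp only [dif_pos h, Function.update_of_ne hne]
  · simp only [dif_neg h]

lemma cubeSample_flipAt {k : Fin m} (σ : Fin m → Bool) {ω : Fin n → ℕ}
    (hk : ∀ i, ω i ≠ k) : cubeSample (flipAt k σ) ω = cubeSample σ ω := by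
  funext i
  simp [cubeSample, cubeLabel_flipAt_of_ne σ (hk i)]

instance [NeZero m] (σ : Fin m → Bool) : IsProbabilityMeasure (cubeLaw σ) :=
  Measure.isProbabilityMeasure_map (measurable_of_countable _).aemeasurable

lemma yBounded_cubeLaw (σ : Fin m → Bool) : yBounded (cubeLaw σ) := by
  rw [yBounded, cubeLaw, ae_map_iff (measurable_of_countable _).aemeasurable
    (measurable_snd measurableSet_Icc)]
  refine Filter.Eventually.of_forall fun j => ?_
  rcases cubeLabel_eq_zero_or_one σ j with h | h <;> simp [h]

lemma risk_cubeLaw (σ : Fin m → Bool) (f : ℕ → ℝ) :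
    risk (cubeLaw σ) f = (m : ℝ)⁻¹ * ∑ j ∈ range m, (f j - cubeLabel σ j) ^ 2 := by
  rw [risk, cubeLaw, integral_map (measurable_of_countable _).aemeasurable
    (by fun_prop (disch := exact measurable_of_countable f)), integral_uniformRange]

lemma risk_cubeLaw_le_one [NeZero m] (σ : Fin m → Bool) {f : ℕ → ℝ}
    (hf : ∀ j, f j ∈ Set.Icc (0 : ℝ) 1) : risk (cubeLaw σ) f ≤ 1 := by
  have hterm : ∀ j ∈ range m, (f j - cubeLabel σ j) ^ 2 ≤ 1 := by
    intro j _
    obtain ⟨h0, h1⟩ := hf j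
    rcases cubeLabel_eq_zero_or_one σ j with h | h <;> rw [h] <;> nlinarith
  calc risk (cubeLaw σ) f ≤ (m : ℝ)⁻¹ * ∑ _j ∈ range m, (1 : ℝ) := by
        rw [risk_cubeLaw]; gcongr with j hj; exact hterm j hj
    _ = 1 := by simp [NeZero.ne]

lemma sampleMeasure_cubeLaw [NeZero m] (σ : Fin m → Bool) (n : ℕ) :
    sampleMeasure (cubeLaw σ) n =
      (Measure.pi fun _ : Fin n => uniformRange m).map (cubeSample σ) :=
  (Measure.pi_map_pi fun _ => (measurable_of_countable _).aemeasurable).symm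

lemma sub_le_card_unseen (m : ℕ) (ω : Fin n → ℕ) :
    (m : ℝ) - n ≤ #(range m \ univ.image ω) := by
  have hsplit := card_le_card_sdiff_add_card (s := range m) (t := univ.image ω)
  have himage : #(univ.image ω) ≤ n := card_image_le.trans (by simp)
  rw [card_range] at hsplit
  have : (m : ℝ) ≤ #(range m \ univ.image ω) + n := by exact_mod_cast hsplit.trans (by omega)
  linarith

lemma sum_risk_cubeLaw_ge (g : Sample ℕ n → ℕ → ℝ) (ω : Fin n → ℕ) :
    ∑ _σ : Fin m → Bool, ((m : ℝ) - n) / (4 * m) ≤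
      ∑ σ : Fin m → Bool, risk (cubeLaw σ) (g (cubeSample σ ω)) := by
  set U := range m \ univ.image ω
  set N := (Fintype.card (Fin m → Bool) : ℝ)
  set err : (Fin m → Bool) → ℕ → ℝ := fun σ j => (g (cubeSample σ ω) j - cubeLabel σ j) ^ 2
  have hunseen : ∀ j ∈ U, N / 4 ≤ ∑ σ, err σ j := by
    intro j hj
    simp only [U, mem_sdiff, mem_range, mem_image, mem_univ, true_and, not_exists] at hj
    have hk : ∀ i, ω i ≠ (⟨j, hj.1⟩ : Fin m) := hj.2
    exact card_div_four_le_sum_sq_sub (flipAt_involutive ⟨j, hj.1⟩)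
      (fun σ => by rw [cubeSample_flipAt σ hk]) (fun σ => cubeLabel_flipAt_self _ σ)
      (fun σ => cubeLabel_eq_zero_or_one σ j)
  calc ∑ _σ : Fin m → Bool, ((m : ℝ) - n) / (4 * m)
      = (m : ℝ)⁻¹ * (((m : ℝ) - n) * (N / 4)) := by
        rw [sum_const, card_univ, nsmul_eq_mul]; ring
    _ ≤ (m : ℝ)⁻¹ * ∑ j ∈ U, N / 4 := by
        rw [sum_const, nsmul_eq_mul]
        gcongr
        exact sub_le_card_unseen m ω
    _ ≤ (m : ℝ)⁻¹ * ∑ j ∈ U, ∑ σ, err σ j := by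
        gcongr with j hj
        exact hunseen j hj
    _ = ∑ σ, (m : ℝ)⁻¹ * ∑ j ∈ U, err σ j := by
        rw [sum_comm, mul_sum]
    _ ≤ ∑ σ, risk (cubeLaw σ) (g (cubeSample σ ω)) := by
        gcongr with σ
        rw [risk_cubeLaw]
        gcongr
        exact sdiff_subset

lemma integral_risk_sampleMeasure_cubeLaw [NeZero m] (σ : Fin m → Bool)
    {g : Sample ℕ n → ℕ → ℝ} (hg : Measurable fun q : Sample ℕ n × ℕ => g q.1 q.2) :
    ∫ D, risk (cubeLaw σ) (g D) ∂sampleMeasure (cubeLaw σ) n =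
      ∫ ω, risk (cubeLaw σ) (g (cubeSample σ ω))
        ∂Measure.pi fun _ : Fin n => uniformRange m := by
  have hrisk : Measurable fun D => risk (cubeLaw σ) (g D) := by
    simp only [risk_cubeLaw]
    refine Measurable.const_mul (Finset.measurable_sum _ fun j _ => ?_) _
    exact ((hg.comp (measurable_id.prodMk measurable_const)).sub measurable_const).pow_const 2
  rw [sampleMeasure_cubeLaw, integral_map (measurable_of_countable _).aemeasurable
    hrisk.aestronglyMeasurable]

lemma sum_integral_risk_cubeLaw_ge [NeZero m] {g : Sample ℕ n → ℕ → ℝ}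
    (hg01 : ∀ D x, g D x ∈ Set.Icc (0 : ℝ) 1)
    (hg : Measurable fun q : Sample ℕ n × ℕ => g q.1 q.2) :
    ∑ _σ : Fin m → Bool, ((m : ℝ) - n) / (4 * m) ≤
      ∑ σ : Fin m → Bool, ∫ D, risk (cubeLaw σ) (g D) ∂sampleMeasure (cubeLaw σ) n := by
  set μ := Measure.pi fun _ : Fin n => uniformRange m
  have hint (σ : Fin m → Bool) : Integrable (fun ω => risk (cubeLaw σ) (g (cubeSample σ ω))) μ :=
    .of_bound (measurable_of_countable _).aestronglyMeasurable 1 <| ae_of_all _ fun ω => by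
      rw [Real.norm_of_nonneg (risk_nonneg _ _)]
      exact risk_cubeLaw_le_one σ (hg01 _)
  simp only [integral_risk_sampleMeasure_cubeLaw _ hg]
  calc ∑ _σ : Fin m → Bool, ((m : ℝ) - n) / (4 * m)
      = ∫ _ω, ∑ _σ : Fin m → Bool, ((m : ℝ) - n) / (4 * m) ∂μ := by simp
    _ ≤ ∫ ω, ∑ σ : Fin m → Bool, risk (cubeLaw σ) (g (cubeSample σ ω)) ∂μ :=
        integral_mono (integrable_const _) (integrable_finsetSum _ fun σ _ => hint σ)
          fun ω => sum_risk_cubeLaw_ge g ω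
    _ = _ := integral_finsetSum _ fun σ _ => hint σ

lemma iInf_risk_seqClass_cubeLaw_le [NeZero m] {p : ℝ} (hp : 0 ≤ p) (σ : Fin m → Bool) :
    ⨅ f : seqClass p, risk (cubeLaw σ) f ≤ (1 - (m : ℝ) ^ (-(1 / p))) / 4 := by
  have hexp : -(1 / p) ≤ 0 := neg_nonpos.mpr (by positivity)
  -- the point of `seqClass p` closest to the vertex `cubeLabel σ` of the cube `[0,1]^m`
  set fσ : ℕ → ℝ := fun j => (1 + (2 * cubeLabel σ j - 1) * ((j : ℝ) + 1) ^ (-(1 / p))) / 2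
  have hmem : fσ ∈ seqClass p := by
    refine ⟨fun j => (2 * cubeLabel σ j - 1) * ((j : ℝ) + 1) ^ (-(1 / p)), fun j => ?_, rfl⟩
    have hsign : |2 * cubeLabel σ j - 1| = 1 := by
      rcases cubeLabel_eq_zero_or_one σ j with h | h <;> norm_num [h]
    rw [abs_mul, hsign, one_mul, abs_of_nonneg (by positivity)]
  have hterm (j : ℕ) (hj : j ∈ range m) :
      (fσ j - cubeLabel σ j) ^ 2 ≤ (1 - (m : ℝ) ^ (-(1 / p))) / 4 := by
    set bj := ((j : ℝ) + 1) ^ (-(1 / p))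
    have hbj : (m : ℝ) ^ (-(1 / p)) ≤ bj :=
      Real.rpow_le_rpow_of_nonpos (by positivity) (by exact_mod_cast mem_range.mp hj) hexp
    have hbj1 : bj ≤ 1 :=
      Real.rpow_le_one_of_one_le_of_nonpos (by linarith [j.cast_nonneg' (α := ℝ)]) hexp
    have hbj0 : 0 ≤ bj := by positivity
    have hsq : (fσ j - cubeLabel σ j) ^ 2 = ((1 - bj) / 2) ^ 2 := by
      rcases cubeLabel_eq_zero_or_one σ j with h | h <;> simp only [fσ, h] <;> ring
    rw [hsq]
    nlinarith
  calc ⨅ f : seqClass p, risk (cubeLaw σ) f ≤ risk (cubeLaw σ) fσ :=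
        ciInf_le ⟨0, by rintro _ ⟨f, rfl⟩; exact risk_nonneg _ _⟩ (⟨fσ, hmem⟩ : seqClass p)
    _ ≤ (m : ℝ)⁻¹ * ∑ _j ∈ range m, (1 - (m : ℝ) ^ (-(1 / p))) / 4 := by
        rw [risk_cubeLaw]; gcongr with j hj; exact hterm j hj
    _ = (1 - (m : ℝ) ^ (-(1 / p))) / 4 := by simp [NeZero.ne]

lemma exists_cubeLaw_regret_ge [NeZero m] {p : ℝ} (hp : 0 ≤ p) {g : Sample ℕ n → ℕ → ℝ}
    (hg01 : ∀ D x, g D x ∈ Set.Icc (0 : ℝ) 1)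
    (hg : Measurable fun q : Sample ℕ n × ℕ => g q.1 q.2) :
    ∃ σ : Fin m → Bool, ((m : ℝ) ^ (-(1 / p)) - n / m) / 4 ≤
      (∫ D, risk (cubeLaw σ) (g D) ∂sampleMeasure (cubeLaw σ) n) -
        ⨅ f : seqClass p, risk (cubeLaw σ) f := by
  have hsplit : ((m : ℝ) ^ (-(1 / p)) - n / m) / 4 =
      ((m : ℝ) - n) / (4 * m) - (1 - (m : ℝ) ^ (-(1 / p))) / 4 := by
    field_simp [NeZero.ne]
    ring
  have hsum : ∑ _σ : Fin m → Bool, ((m : ℝ) ^ (-(1 / p)) - n / m) / 4 ≤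
      ∑ σ : Fin m → Bool, ((∫ D, risk (cubeLaw σ) (g D) ∂sampleMeasure (cubeLaw σ) n) -
        ⨅ f : seqClass p, risk (cubeLaw σ) f) := by
    rw [sum_congr rfl fun _ _ => hsplit, sum_sub_distrib, sum_sub_distrib]
    exact sub_le_sub (sum_integral_risk_cubeLaw_ge hg01 hg)
      (sum_le_sum fun σ _ => iInf_risk_seqClass_cubeLaw_le hp σ)
  obtain ⟨σ, -, hσ⟩ := exists_le_of_sum_le univ_nonempty hsum
  exact ⟨σ, hσ⟩

end Hypercube

lemma exists_nat_rpow_neg_sub_div_ge {p : ℝ} (hp : 2 ≤ p) {n : ℕ} (hn : 1 ≤ n) :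
    ∃ m : ℕ, 0 < m ∧ (n : ℝ) ^ (-(1 / (p - 1))) / 8 ≤ (m : ℝ) ^ (-(1 / p)) - n / m := by
  have hp1 : 0 < p - 1 := by linarith
  have h2n : 1 ≤ 2 * (n : ℝ) := by
    have : (1 : ℝ) ≤ n := by exact_mod_cast hn
    linarith
  -- `m ≈ (2n)^{p/(p-1)}` makes `n / m` at most half of `m^{-1/p}`
  set x : ℝ := (2 * n) ^ (p / (p - 1))
  have hx : 2 * n ≤ x := Real.self_le_rpow_of_one_le h2n (by rw [le_div_iff₀ hp1]; linarith)
  refine ⟨⌈x⌉₊, Nat.ceil_pos.mpr (by linarith), ?_⟩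
  set m := ⌈x⌉₊
  have hxm : x ≤ m := Nat.le_ceil x
  have hmx : (m : ℝ) ≤ 2 * x := (Nat.ceil_lt_add_one (by linarith)).le.trans (by linarith)
  have hm : (0 : ℝ) < m := by linarith
  set b := (m : ℝ) ^ (-(1 / p))
  have hdiv : (n : ℝ) / m ≤ b / 2 := by
    have hmb : (m : ℝ) * b = (m : ℝ) ^ ((p - 1) / p) := by
      rw [show (p - 1) / p = 1 + -(1 / p) by field_simp; ring, Real.rpow_add hm, Real.rpow_one]
    have hx' : x ^ ((p - 1) / p) = 2 * n := by
      rw [← Real.rpow_mul (by linarith), show p / (p - 1) * ((p - 1) / p) = 1 by field_simp,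
        Real.rpow_one]
    have : 2 * (n : ℝ) ≤ m * b := by
      rw [hmb, ← hx']
      exact Real.rpow_le_rpow (by linarith) hxm (by positivity)
    rw [div_le_div_iff₀ hm two_pos]
    linarith
  have hb : (n : ℝ) ^ (-(1 / (p - 1))) / 4 ≤ b := by
    have hexp : -2 ≤ -(1 / p) + -(1 / (p - 1)) := by
      have : 1 / p ≤ 1 := by rw [div_le_one (by linarith)]; linarith
      have : 1 / (p - 1) ≤ 1 := by rw [div_le_one hp1]; linarith
      linarith
    calc (n : ℝ) ^ (-(1 / (p - 1))) / 4 = (2 : ℝ) ^ (-2 : ℝ) * n ^ (-(1 / (p - 1))) := by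
          norm_num [Real.rpow_neg]; ring
      _ ≤ (2 : ℝ) ^ (-(1 / p) + -(1 / (p - 1))) * n ^ (-(1 / (p - 1))) := by
          gcongr
          norm_num
      _ = (2 * x) ^ (-(1 / p)) := by
          rw [Real.mul_rpow (by norm_num) (by linarith), ← Real.rpow_mul (by linarith),
            show p / (p - 1) * -(1 / p) = -(1 / (p - 1)) by field_simp,
            Real.mul_rpow (by norm_num) (by positivity), Real.rpow_add two_pos]
          ring
      _ ≤ b := Real.rpow_le_rpow_of_nonpos hm hmx (neg_nonpos.mpr (by positivity))
  linarith

/-- **Theorem 7, minimax regret lower bound (eq. (th:low2:3)).** There is an absolute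
constant `c > 0` such that for every `p ≥ 2` and every `n ≥ 1`, for every estimator `f̂`
(based on an i.i.d. `n`-sample, with values in `[0,1]`) there is a distribution `P` on
`X × [0,1]` with `E L(f̂) - inf_{f ∈ F} L(f) = E‖f̂-η‖² - inf_{f∈F} ‖f-η‖² ≥ c n^{-1/(p-1)}`;
hence `V_n(F) ≥ c n^{-1/(p-1)}`, a rate slower than the minimax risk rate `n^{-2/(2+p)}`
for `p > 2`. -/
theorem minimax_regret_lower_bound_sequence_class :
    ∃ c : ℝ, 0 < c ∧
      ∀ p : ℝ, 2 ≤ p → ∀ n : ℕ, 1 ≤ n →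
        ∀ fhat : Sample ℕ n → ℕ → ℝ,
          (∀ D x, fhat D x ∈ Set.Icc (0 : ℝ) 1) →
          Measurable (fun q : Sample ℕ n × ℕ => fhat q.1 q.2) →
          ∃ (P : Measure (ℕ × ℝ)) (hP : IsProbabilityMeasure P), yBounded P ∧
            c * (n : ℝ) ^ (-(1 / (p - 1))) ≤
              (∫ D, risk P (fhat D) ∂(@sampleMeasure ℕ _ P hP n)) -
                ⨅ f : ↥(seqClass p), risk P f.1 := by
  refine ⟨1 / 32, by norm_num, fun p hp n hn fhat hrange hmeas => ?_⟩
  obtain ⟨m, hm, hnum⟩ := exists_nat_rpow_neg_sub_div_ge hp hn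
  have : NeZero m := ⟨hm.ne'⟩
  obtain ⟨σ, hσ⟩ := exists_cubeLaw_regret_ge (m := m) (p := p) (by linarith) hrange hmeas
  exact ⟨cubeLaw σ, inferInstance, yBounded_cubeLaw σ, by linarith⟩

end RST
end
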